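/- arXiv:2402.07443 — 4 statements merged into one kernel-verified Lean document; each statement's English description precedes it below -/
import Mathlib

section
/- Any one-way communication protocol over alphabet F_q solving the B-entry matrix compression problem (Alice holds Q, K ∈ F_q^{N×d}; Bob must output B specified entries of QK^T correctly for all inputs) requires messages of length at least √B field elements (i.e., √B · log q bits). -/
/-- Any one-way protocol over alphabet `F_q` solving the `B`-entry
matrix compression problem (Bob must output `B` specified entries of `QKᵀ`
correctly for all inputs) requires messages of length at least `√B` field
elements. -/
theorem matrix_entry_compression_sqrt_lower_bound
    (F : Type*) [Field F] [Fintype F] (N d B L : ℕ) (hd : 1 ≤ d)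
    (I : Finset (Fin N × Fin N)) (hI : I.card = B)
    (E : Matrix (Fin N) (Fin d) F → Matrix (Fin N) (Fin d) F → (Fin L → F))
    (D : (Fin L → F) → (Fin N × Fin N) → F)
    (hcorrect : ∀ Q K : Matrix (Fin N) (Fin d) F, ∀ p ∈ I,
      D (E Q K) p = (Q * K.transpose) p.1 p.2) :
    Real.sqrt B ≤ L := by
  classical
  set z : Fin d := ⟨0, hd⟩ with hz
  set R : Finset (Fin N) := I.image Prod.fst with hR
  set C : Finset (Fin N) := I.image Prod.snd with hC
  have hq : 1 < Fintype.card F := Fintype.one_lt_card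
  -- matrices
  have keyprod : ∀ (f g : Fin N → F) (i j : Fin N),
      ((Matrix.of fun i k => if k = z then f i else 0) *
        (Matrix.of fun i k => if k = z then g i else 0).transpose) i j
        = f i * g j := by
    intro f g i j
    rw [Matrix.mul_apply]
    rw [Finset.sum_eq_single z]
    · simp
    · intro b _ hb
      simp [hb]
    · simp
  -- |R| ≤ L
  have hRL : R.card ≤ L := by
    have hinj : Function.Injective
        (fun f : {x // x ∈ R} → F =>
          E (Matrix.of fun i k => if k = z then
              (if h : i ∈ R then f ⟨i, h⟩ else 0) else 0)
            (Matrix.of fun i k => if k = z then (1 : F) else 0)) := by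
      intro f g hfg
      funext r
      obtain ⟨r, hr⟩ := r
      obtain ⟨p, hp, hpr⟩ := Finset.mem_image.mp hr
      have h1 := hcorrect (Matrix.of fun i k => if k = z then
              (if h : i ∈ R then f ⟨i, h⟩ else 0) else 0)
            (Matrix.of fun i k => if k = z then (1 : F) else 0) p hp
      have h2 := hcorrect (Matrix.of fun i k => if k = z then
              (if h : i ∈ R then g ⟨i, h⟩ else 0) else 0)
            (Matrix.of fun i k => if k = z then (1 : F) else 0) p hp
      rw [keyprod (fun i => if h : i ∈ R then f ⟨i, h⟩ else 0) (fun _ => 1)] at h1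
      rw [keyprod (fun i => if h : i ∈ R then g ⟨i, h⟩ else 0) (fun _ => 1)] at h2
      simp only [] at hfg
      rw [hfg] at h1
      rw [h1] at h2
      subst hpr
      simpa [hr] using h2
    have := Fintype.card_le_of_injective _ hinj
    simp only [Fintype.card_fun, Fintype.card_coe, Fintype.card_fin] at this
    exact (Nat.pow_le_pow_iff_right hq).mp this
  -- |C| ≤ L
  have hCL : C.card ≤ L := by
    have hinj : Function.Injective
        (fun f : {x // x ∈ C} → F =>
          E (Matrix.of fun i k => if k = z then (1 : F) else 0)
            (Matrix.of fun i k => if k = z then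
              (if h : i ∈ C then f ⟨i, h⟩ else 0) else 0)) := by
      intro f g hfg
      funext r
      obtain ⟨r, hr⟩ := r
      obtain ⟨p, hp, hpr⟩ := Finset.mem_image.mp hr
      have h1 := hcorrect (Matrix.of fun i k => if k = z then (1 : F) else 0)
            (Matrix.of fun i k => if k = z then
              (if h : i ∈ C then f ⟨i, h⟩ else 0) else 0) p hp
      have h2 := hcorrect (Matrix.of fun i k => if k = z then (1 : F) else 0)
            (Matrix.of fun i k => if k = z then
              (if h : i ∈ C then g ⟨i, h⟩ else 0) else 0) p hp
      rw [keyprod (fun _ => 1) (fun i => if h : i ∈ C then f ⟨i, h⟩ else 0)] at h1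
      rw [keyprod (fun _ => 1) (fun i => if h : i ∈ C then g ⟨i, h⟩ else 0)] at h2
      simp only [] at hfg
      rw [hfg] at h1
      rw [h1] at h2
      subst hpr
      simpa [hr] using h2
    have := Fintype.card_le_of_injective _ hinj
    simp only [Fintype.card_fun, Fintype.card_coe, Fintype.card_fin] at this
    exact (Nat.pow_le_pow_iff_right hq).mp this
  -- B ≤ |R| * |C|
  have hB : B ≤ L * L := by
    have hsub : I ⊆ R ×ˢ C := by
      intro p hp
      exact Finset.mem_product.mpr ⟨Finset.mem_image_of_mem _ hp,
        Finset.mem_image_of_mem _ hp⟩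
    calc B = I.card := hI.symm
      _ ≤ (R ×ˢ C).card := Finset.card_le_card hsub
      _ = R.card * C.card := Finset.card_product _ _
      _ ≤ L * L := Nat.mul_le_mul hRL hCL
  have : (B : ℝ) ≤ (L : ℝ) * L := by exact_mod_cast hB
  calc Real.sqrt B ≤ Real.sqrt ((L : ℝ) * L) := Real.sqrt_le_sqrt this
    _ = L := Real.sqrt_mul_self (by positivity)
end

section
/- Suppose q > N. Any one-way communication protocol over F_q solving the B-entry matrix compression problem for Q, K ∈ F_q^{N×d} requires messages of at least min(d·√(B/2), B/4) field elements. -/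
open Finset

private lemma sum_castLE_aux {M : Type*} [AddCommMonoid M] {a b : ℕ} (h : a ≤ b)
    (f : Fin b → M) (hf : ∀ m : Fin b, ¬ ((m:ℕ) < a) → f m = 0) :
    ∑ m : Fin b, f m = ∑ s : Fin a, f (Fin.castLE h s) := by
  have h1 : ∑ s : Fin a, f (Fin.castLE h s)
      = ∑ m ∈ Finset.univ.image (Fin.castLE h), f m :=
    (Finset.sum_image (fun x _ y _ hxy => Fin.castLE_injective h hxy)).symm
  rw [h1]
  refine (Finset.sum_subset (Finset.subset_univ _) ?_).symm
  intro m _ hm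
  refine hf m fun hlt => hm ?_
  exact Finset.mem_image.mpr ⟨⟨(m:ℕ), hlt⟩, Finset.mem_univ _, Fin.ext rfl⟩

private lemma row_bound {F : Type*} [Field F] [Fintype F] {N d L : ℕ}
    (hq : N < Fintype.card F)
    (I : Finset (Fin N × Fin N))
    (E : Matrix (Fin N) (Fin d) F → Matrix (Fin N) (Fin d) F → (Fin L → F))
    (D : (Fin L → F) → (Fin N × Fin N) → F)
    (hcorrect : ∀ Q K : Matrix (Fin N) (Fin d) F, ∀ p ∈ I,
      D (E Q K) p = (Q * K.transpose) p.1 p.2) :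
    ∑ i : Fin N, min ((Finset.univ.filter fun j => (i, j) ∈ I).card) d ≤ L := by
  obtain ⟨α⟩ : Nonempty (Fin N ↪ F) :=
    Function.Embedding.nonempty_iff_card_le.mpr (by simpa using hq.le)
  set R : Fin N → Finset (Fin N) := fun i => Finset.univ.filter fun j => (i, j) ∈ I with hR
  set k : Fin N → ℕ := fun i => min (R i).card d with hk
  have hkR : ∀ i, k i ≤ (R i).card := fun i => min_le_left _ _
  have hkd : ∀ i, k i ≤ d := fun i => min_le_right _ _
  set e : ∀ i, Fin (k i) → Fin N :=
    fun i t => ((R i).orderIsoOfFin rfl (Fin.castLE (hkR i) t) : Fin N) with he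
  have heI : ∀ i t, (i, e i t) ∈ I := by
    intro i t
    have h1 : (e i t) ∈ R i := ((R i).orderIsoOfFin rfl (Fin.castLE (hkR i) t)).2
    rw [hR] at h1
    simpa using h1
  have hein : ∀ i, Function.Injective (e i) := by
    intro i x y hxy
    exact Fin.castLE_injective _ (((R i).orderIsoOfFin rfl).injective (Subtype.ext hxy))
  set K : Matrix (Fin N) (Fin d) F := Matrix.of fun j m => α j ^ (m : ℕ) with hK
  set V : ∀ i, Matrix (Fin (k i)) (Fin (k i)) F :=
    fun i => Matrix.vandermonde (fun t => α (e i t)) with hV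
  have hVdet : ∀ i, IsUnit (V i).det := by
    intro i
    rw [isUnit_iff_ne_zero, hV]
    exact Matrix.det_vandermonde_ne_zero_iff.mpr (α.injective.comp (hein i))
  set Qv : (∀ i, Fin (k i) → F) → Matrix (Fin N) (Fin d) F := fun v => Matrix.of fun i m =>
    if h : (m : ℕ) < k i then ((V i)⁻¹.mulVec (v i)) ⟨m, h⟩ else 0 with hQv
  have hval : ∀ v i t, (Qv v * K.transpose) i (e i t) = v i t := by
    intro v i t
    have h1 : (Qv v * K.transpose) i (e i t)
        = ∑ m : Fin d, Qv v i m * α (e i t) ^ (m:ℕ) := by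
      simp [Matrix.mul_apply, hK, Matrix.transpose_apply]
    rw [h1, sum_castLE_aux (hkd i) _ (by
      intro m hm
      simp only [hQv, Matrix.of_apply, dif_neg hm, zero_mul])]
    have h2 : ∀ s : Fin (k i), Qv v i (Fin.castLE (hkd i) s) = ((V i)⁻¹.mulVec (v i)) s := by
      intro s
      simp only [hQv, Matrix.of_apply, Fin.coe_castLE, dif_pos s.isLt]
    have h3 : ∑ s : Fin (k i), Qv v i (Fin.castLE (hkd i) s) * α (e i t) ^ ((Fin.castLE (hkd i) s : Fin d) : ℕ)
        = ((V i).mulVec ((V i)⁻¹.mulVec (v i))) t := by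
      rw [Matrix.mulVec, dotProduct]
      refine Finset.sum_congr rfl fun s _ => ?_
      rw [h2 s, hV]
      simp [Matrix.vandermonde, mul_comm]
    rw [h3, Matrix.mulVec_mulVec, Matrix.mul_nonsing_inv _ (hVdet i), Matrix.one_mulVec]
  have hinj : Function.Injective fun v : (∀ i, Fin (k i) → F) => E (Qv v) K := by
    intro v w hvw
    funext i t
    have h1 := hcorrect (Qv v) K (i, e i t) (heI i t)
    have h2 := hcorrect (Qv w) K (i, e i t) (heI i t)
    have hvw' : E (Qv v) K = E (Qv w) K := hvw
    have : D (E (Qv v) K) (i, e i t) = D (E (Qv w) K) (i, e i t) := by rw [hvw']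
    rw [h1, h2] at this
    simpa [hval] using this
  have hcard := Fintype.card_le_of_injective _ hinj
  rw [Fintype.card_pi] at hcard
  simp only [Fintype.card_fun, Fintype.card_fin] at hcard
  rw [Finset.prod_pow_eq_pow_sum] at hcard
  exact (Nat.pow_le_pow_iff_right Fintype.one_lt_card).mp hcard

/-- For `q > N`, any one-way protocol over `F_q` solving the
`B`-entry matrix compression problem for `Q, K ∈ F_q^{N×d}` requires messages
of at least `min(d·√(B/2), B/4)` field elements. -/
theorem matrix_entry_compression_large_field_lower_bound
    (F : Type*) [Field F] [Fintype F] (N d B L : ℕ)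
    (hq : N < Fintype.card F)
    (I : Finset (Fin N × Fin N)) (hI : I.card = B)
    (E : Matrix (Fin N) (Fin d) F → Matrix (Fin N) (Fin d) F → (Fin L → F))
    (D : (Fin L → F) → (Fin N × Fin N) → F)
    (hcorrect : ∀ Q K : Matrix (Fin N) (Fin d) F, ∀ p ∈ I,
      D (E Q K) p = (Q * K.transpose) p.1 p.2) :
    min (d * Real.sqrt (B / 2)) (B / 4) ≤ L := by
  classical
  -- row and column counts
  set r : Fin N → ℕ := fun i => (Finset.univ.filter fun j => (i, j) ∈ I).card with hr
  set c : Fin N → ℕ := fun j => (Finset.univ.filter fun i => (i, j) ∈ I).card with hc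
  have hrow : ∑ i : Fin N, min (r i) d ≤ L := row_bound hq I E D hcorrect
  have hswap : ∀ i j : Fin N, ((j, i) ∈ I.image Prod.swap) ↔ (i, j) ∈ I := by
    intro i j
    constructor
    · intro h
      obtain ⟨p, hp, hpe⟩ := Finset.mem_image.mp h
      have hpij : p = (i, j) := by
        have := congrArg Prod.swap hpe
        simpa using this
      rwa [hpij] at hp
    · intro h
      exact Finset.mem_image.mpr ⟨(i, j), h, rfl⟩
  have hcol : ∑ j : Fin N, min (c j) d ≤ L := by
    have h := row_bound hq (I.image Prod.swap)
      (fun Q K => E K Q) (fun m p => D m p.swap) ?_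
    · refine le_trans (le_of_eq ?_) h
      refine Finset.sum_congr rfl fun j _ => ?_
      have heq : (Finset.univ.filter fun i => (j, i) ∈ I.image Prod.swap)
          = Finset.univ.filter fun i => (i, j) ∈ I := by
        apply Finset.filter_congr
        intro i _
        simp [hswap]
      rw [hc]
      simp only [← heq]
    · intro Q K p hp
      obtain ⟨q, hq', hqe⟩ := Finset.mem_image.mp hp
      have hps : p = q.swap := hqe.symm
      subst hps
      have h2 := hcorrect K Q q hq'
      simp only [Prod.swap_swap]
      rw [h2]
      rcases q with ⟨a, b⟩
      simp [Matrix.mul_apply, Matrix.transpose_apply, mul_comm]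
  -- fiber cardinalities
  have hfib : ∀ i : Fin N, (I.filter fun p => p.1 = i).card = r i := by
    intro i
    apply Finset.card_bij (fun p _ => p.2)
    · intro p hp
      obtain ⟨hpI, hp1⟩ := Finset.mem_filter.mp hp
      simp only [Finset.mem_filter, Finset.mem_univ, true_and]
      rwa [← hp1, Prod.mk.eta]
    · intro p hp p' hp' hpp
      obtain ⟨_, hp1⟩ := Finset.mem_filter.mp hp
      obtain ⟨_, hp1'⟩ := Finset.mem_filter.mp hp'
      exact Prod.ext (hp1.trans hp1'.symm) hpp
    · intro j hj
      simp only [Finset.mem_filter, Finset.mem_univ, true_and] at hj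
      exact ⟨(i, j), Finset.mem_filter.mpr ⟨hj, rfl⟩, rfl⟩
  have hfib' : ∀ j : Fin N, (I.filter fun p => p.2 = j).card = c j := by
    intro j
    apply Finset.card_bij (fun p _ => p.1)
    · intro p hp
      obtain ⟨hpI, hp2⟩ := Finset.mem_filter.mp hp
      simp only [Finset.mem_filter, Finset.mem_univ, true_and]
      rwa [← hp2, Prod.mk.eta]
    · intro p hp p' hp' hpp
      obtain ⟨_, hp2⟩ := Finset.mem_filter.mp hp
      obtain ⟨_, hp2'⟩ := Finset.mem_filter.mp hp'
      exact Prod.ext hpp (hp2.trans hp2'.symm)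
    · intro i hi
      simp only [Finset.mem_filter, Finset.mem_univ, true_and] at hi
      exact ⟨(i, j), Finset.mem_filter.mpr ⟨hi, rfl⟩, rfl⟩
  -- heavy rows / columns
  set TR : Finset (Fin N) := Finset.univ.filter fun i => d ≤ r i with hTR
  set TC : Finset (Fin N) := Finset.univ.filter fun j => d ≤ c j with hTC
  have hTRcard : d * TR.card ≤ L := by
    refine le_trans ?_ hrow
    calc d * TR.card = ∑ i ∈ TR, d := by rw [Finset.sum_const, smul_eq_mul, mul_comm]
    _ = ∑ i ∈ TR, min (r i) d := by
        refine Finset.sum_congr rfl fun i hi => ?_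
        rw [hTR] at hi
        exact (min_eq_right (Finset.mem_filter.mp hi).2).symm
    _ ≤ ∑ i : Fin N, min (r i) d := Finset.sum_le_sum_of_subset (Finset.subset_univ _)
  have hTCcard : d * TC.card ≤ L := by
    refine le_trans ?_ hcol
    calc d * TC.card = ∑ j ∈ TC, d := by rw [Finset.sum_const, smul_eq_mul, mul_comm]
    _ = ∑ j ∈ TC, min (c j) d := by
        refine Finset.sum_congr rfl fun j hj => ?_
        rw [hTC] at hj
        exact (min_eq_right (Finset.mem_filter.mp hj).2).symm
    _ ≤ ∑ j : Fin N, min (c j) d := Finset.sum_le_sum_of_subset (Finset.subset_univ _)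
  -- light rows carry few entries
  have hbadR : (I.filter fun p => ¬ d ≤ r p.1).card ≤ L := by
    refine le_trans ?_ hrow
    rw [Finset.card_eq_sum_card_fiberwise
      (f := Prod.fst) (t := Finset.univ) (fun p _ => Finset.mem_univ _)]
    refine Finset.sum_le_sum fun i _ => ?_
    by_cases hdi : d ≤ r i
    · have hemp : ((I.filter fun p => ¬ d ≤ r p.1).filter fun p => p.1 = i) = ∅ := by
        rw [Finset.eq_empty_iff_forall_notMem]
        intro p hp
        obtain ⟨hp', hp1⟩ := Finset.mem_filter.mp hp
        exact (Finset.mem_filter.mp hp').2 (by rw [hp1]; exact hdi)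
      rw [hemp]
      simp
    · have hsub : ((I.filter fun p => ¬ d ≤ r p.1).filter fun p => p.1 = i)
          ⊆ I.filter fun p => p.1 = i := by
        intro p hp
        obtain ⟨hp', hp1⟩ := Finset.mem_filter.mp hp
        exact Finset.mem_filter.mpr ⟨(Finset.mem_filter.mp hp').1, hp1⟩
      calc ((I.filter fun p => ¬ d ≤ r p.1).filter fun p => p.1 = i).card
          ≤ (I.filter fun p => p.1 = i).card := Finset.card_le_card hsub
        _ = r i := hfib i
        _ = min (r i) d := (min_eq_left (le_of_not_ge hdi)).symm
  have hbadC : (I.filter fun p => ¬ d ≤ c p.2).card ≤ L := by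
    refine le_trans ?_ hcol
    rw [Finset.card_eq_sum_card_fiberwise
      (f := Prod.snd) (t := Finset.univ) (fun p _ => Finset.mem_univ _)]
    refine Finset.sum_le_sum fun j _ => ?_
    by_cases hdj : d ≤ c j
    · have hemp : ((I.filter fun p => ¬ d ≤ c p.2).filter fun p => p.2 = j) = ∅ := by
        rw [Finset.eq_empty_iff_forall_notMem]
        intro p hp
        obtain ⟨hp', hp2⟩ := Finset.mem_filter.mp hp
        exact (Finset.mem_filter.mp hp').2 (by rw [hp2]; exact hdj)
      rw [hemp]
      simp
    · have hsub : ((I.filter fun p => ¬ d ≤ c p.2).filter fun p => p.2 = j)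
          ⊆ I.filter fun p => p.2 = j := by
        intro p hp
        obtain ⟨hp', hp2⟩ := Finset.mem_filter.mp hp
        exact Finset.mem_filter.mpr ⟨(Finset.mem_filter.mp hp').1, hp2⟩
      calc ((I.filter fun p => ¬ d ≤ c p.2).filter fun p => p.2 = j).card
          ≤ (I.filter fun p => p.2 = j).card := Finset.card_le_card hsub
        _ = c j := hfib' j
        _ = min (c j) d := (min_eq_left (le_of_not_ge hdj)).symm
  -- heavy entries fit in a grid
  have hgood : (I.filter fun p => d ≤ r p.1 ∧ d ≤ c p.2).card ≤ TR.card * TC.card := by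
    rw [← Finset.card_product]
    apply Finset.card_le_card
    intro p hp
    obtain ⟨hpI, h1, h2⟩ := Finset.mem_filter.mp hp
    exact Finset.mem_product.mpr ⟨Finset.mem_filter.mpr ⟨Finset.mem_univ _, h1⟩,
      Finset.mem_filter.mpr ⟨Finset.mem_univ _, h2⟩⟩
  have hsplit : B ≤ (I.filter fun p => d ≤ r p.1 ∧ d ≤ c p.2).card
      + ((I.filter fun p => ¬ d ≤ r p.1).card + (I.filter fun p => ¬ d ≤ c p.2).card) := by
    have hsub : (I.filter fun p => ¬(d ≤ r p.1 ∧ d ≤ c p.2))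
        ⊆ (I.filter fun p => ¬ d ≤ r p.1) ∪ (I.filter fun p => ¬ d ≤ c p.2) := by
      intro p hp
      obtain ⟨hpI, hp2⟩ := Finset.mem_filter.mp hp
      rw [Finset.mem_union]
      rcases not_and_or.mp hp2 with h | h
      · exact Or.inl (Finset.mem_filter.mpr ⟨hpI, h⟩)
      · exact Or.inr (Finset.mem_filter.mpr ⟨hpI, h⟩)
    calc B = I.card := hI.symm
      _ = (I.filter fun p => d ≤ r p.1 ∧ d ≤ c p.2).card
          + (I.filter fun p => ¬(d ≤ r p.1 ∧ d ≤ c p.2)).card :=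
        (Finset.card_filter_add_card_filter_not _).symm
      _ ≤ _ := by
        gcongr
        calc (I.filter fun p => ¬(d ≤ r p.1 ∧ d ≤ c p.2)).card
            ≤ ((I.filter fun p => ¬ d ≤ r p.1) ∪ (I.filter fun p => ¬ d ≤ c p.2)).card :=
              Finset.card_le_card hsub
          _ ≤ _ := Finset.card_union_le _ _
  have hkey : d * d * B ≤ L * L + 2 * (d * d) * L := by
    have h1 : d * d * (I.filter fun p => d ≤ r p.1 ∧ d ≤ c p.2).card ≤ L * L := by
      calc d * d * (I.filter fun p => d ≤ r p.1 ∧ d ≤ c p.2).card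
          ≤ d * d * (TR.card * TC.card) := Nat.mul_le_mul le_rfl hgood
        _ = (d * TR.card) * (d * TC.card) := by ring
        _ ≤ L * L := Nat.mul_le_mul hTRcard hTCcard
    have h2 : d * d * (I.filter fun p => ¬ d ≤ r p.1).card ≤ d * d * L :=
      Nat.mul_le_mul le_rfl hbadR
    have h3 : d * d * (I.filter fun p => ¬ d ≤ c p.2).card ≤ d * d * L :=
      Nat.mul_le_mul le_rfl hbadC
    have h4 : d * d * B ≤ d * d * ((I.filter fun p => d ≤ r p.1 ∧ d ≤ c p.2).card
      + ((I.filter fun p => ¬ d ≤ r p.1).card + (I.filter fun p => ¬ d ≤ c p.2).card)) :=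
      Nat.mul_le_mul le_rfl hsplit
    calc d * d * B ≤ _ := h4
      _ = d * d * (I.filter fun p => d ≤ r p.1 ∧ d ≤ c p.2).card
          + (d * d * (I.filter fun p => ¬ d ≤ r p.1).card
          + d * d * (I.filter fun p => ¬ d ≤ c p.2).card) := by ring
      _ ≤ L * L + (d * d * L + d * d * L) := by
          exact Nat.add_le_add h1 (Nat.add_le_add h2 h3)
      _ = L * L + 2 * (d * d) * L := by ring
  -- conclude with real arithmetic
  rcases Nat.eq_zero_or_pos d with hd0 | hdpos
  · subst hd0
    refine le_trans (min_le_left _ _) ?_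
    simp only [Nat.cast_zero, zero_mul]
    exact Nat.cast_nonneg L
  by_contra hcon
  push_neg at hcon
  rw [lt_min_iff] at hcon
  obtain ⟨h1, h2⟩ := hcon
  have hs := Real.mul_self_sqrt (show (0:ℝ) ≤ (B:ℝ)/2 by positivity)
  have hL2 : (L:ℝ) * (L:ℝ) < (d:ℝ) * (d:ℝ) * ((B:ℝ)/2) := by
    nlinarith [h1, Real.sqrt_nonneg ((B:ℝ)/2), Nat.cast_nonneg (α := ℝ) L, hs]
  have hdR : (0:ℝ) < (d:ℝ) := by exact_mod_cast hdpos
  have hL3 : 2 * ((d:ℝ) * (d:ℝ)) * (L:ℝ) < (d:ℝ) * (d:ℝ) * ((B:ℝ)/2) := by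
    have hp : (0:ℝ) < 2 * ((d:ℝ) * (d:ℝ)) := by positivity
    have := mul_lt_mul_of_pos_left h2 hp
    linarith
  have hcast : (d:ℝ) * (d:ℝ) * (B:ℝ) ≤ (L:ℝ) * (L:ℝ) + 2 * ((d:ℝ) * (d:ℝ)) * (L:ℝ) := by
    exact_mod_cast hkey
  linarith
end

section
/- For any set I ⊆ [N]×[N] with |I| = B and any t ≥ 1, Σ_{i ∈ R_I} min(|R_i|, t) ≥ min(t·√(B/2), B/4), where R_I is the set of distinct row indices of I and R_i = {j : (i,j) ∈ I}. -/
/-!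
Call a row or column heavy if it has at least `t` points, light otherwise. A heavy line
contributes `t` to its truncated sum and a light line its full count, so the light rows carry at
most the row sum `S` of points and the heavy rows number at most `S / t`, and likewise with the
column sum `T`. Every point lies in a light row, a light column, or the product of the heavy rows
and heavy columns, so `B ≤ S + T + (S / t)(T / t)`. Either one of the two heavy families has at
least `√(B/2)` members, giving `t√(B/2)`, or the product term is below `B/2` and `S + T ≥ B/2`.
-/

open Finset

section FiberCounts

variable {γ κ : Type*} [DecidableEq κ]

/-- For `π = Prod.fst` this is the paper's `|R_k|`. -/
def fiberCard (I : Finset γ) (π : γ → κ) (k : κ) : ℕ := #{p ∈ I | π p = k}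

variable (I : Finset γ) (π : γ → κ) (t : ℕ)

theorem card_heavy_fibers_mul_le_sum_min :
    #{k ∈ I.image π | t ≤ fiberCard I π k} * t ≤
      ∑ k ∈ I.image π, min (fiberCard I π k) t :=
  calc #{k ∈ I.image π | t ≤ fiberCard I π k} * t
      ≤ ∑ k ∈ I.image π with t ≤ fiberCard I π k, min (fiberCard I π k) t := by
        rw [← smul_eq_mul]
        exact card_nsmul_le_sum _ _ _ fun k hk => le_min (mem_filter.mp hk).2 le_rfl
    _ ≤ ∑ k ∈ I.image π, min (fiberCard I π k) t :=
        sum_le_sum_of_subset (filter_subset _ _)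

theorem card_light_points_le_sum_min :
    #{p ∈ I | fiberCard I π (π p) < t} ≤ ∑ k ∈ I.image π, min (fiberCard I π k) t := by
  rw [card_eq_sum_card_fiberwise fun p hp => mem_image_of_mem π (mem_filter.mp hp).1]
  refine sum_le_sum fun k _ => ?_
  rw [filter_filter]
  by_cases hk : fiberCard I π k < t
  · rw [min_eq_left hk.le]
    exact card_le_card (monotone_filter_right _ fun p _ h => h.2)
  · rw [card_eq_zero.mpr (filter_eq_empty_iff.mpr fun p _ ⟨hlight, hpk⟩ => hk (hpk ▸ hlight))]
    exact Nat.zero_le _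

end FiberCounts

theorem card_le_light_rows_add_light_cols_add_heavy_mul {α β : Type*} [DecidableEq α]
    [DecidableEq β] (I : Finset (α × β)) (t : ℕ) :
    #I ≤ #{p ∈ I | fiberCard I Prod.fst p.1 < t} + #{p ∈ I | fiberCard I Prod.snd p.2 < t} +
      #{i ∈ I.image Prod.fst | t ≤ fiberCard I Prod.fst i} *
        #{j ∈ I.image Prod.snd | t ≤ fiberCard I Prod.snd j} := by
  rw [← card_product]
  refine (card_le_card fun p hp => ?_).trans ((card_union_le _ _).trans
    (Nat.add_le_add_right (card_union_le _ _) _))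
  simp only [mem_union, mem_filter, mem_product, mem_image_of_mem _ hp, hp, true_and]
  omega

theorem min_mul_sqrt_le_max_of_le_add_mul {B t r c S T : ℕ} (hcover : B ≤ S + T + r * c)
    (hS : r * t ≤ S) (hT : c * t ≤ T) :
    min (t * √((B : ℝ) / 2)) ((B : ℝ) / 4) ≤ max (S : ℝ) T := by
  have hcover' : (B : ℝ) ≤ S + T + r * c := mod_cast hcover
  have hS' : (r * t : ℝ) ≤ S := mod_cast hS
  have hT' : (c * t : ℝ) ≤ T := mod_cast hT
  have ht : (0 : ℝ) ≤ t := t.cast_nonneg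
  by_cases hr : √((B : ℝ) / 2) ≤ r
  · exact (min_le_left _ _).trans <| le_max_of_le_left <| by nlinarith
  by_cases hc : √((B : ℝ) / 2) ≤ c
  · exact (min_le_left _ _).trans <| le_max_of_le_right <| by nlinarith
  have hsq : √((B : ℝ) / 2) * √((B : ℝ) / 2) = B / 2 := Real.mul_self_sqrt (by positivity)
  have hrc : (r * c : ℝ) < B / 2 := by nlinarith [r.cast_nonneg (α := ℝ)]
  exact (min_le_right _ _).trans <| by linarith [le_max_left (S : ℝ) T, le_max_right (S : ℝ) T]

theorem sum_min_row_counts_lower_bound_general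
    (N t B : ℕ) (I : Finset (Fin N × Fin N)) (hI : I.card = B) :
    min (t * Real.sqrt (B / 2)) (B / 4) ≤
      max
        (∑ i ∈ I.image Prod.fst,
          ((min ((I.filter (fun p => p.1 = i)).card) t : ℕ) : ℝ))
        (∑ j ∈ I.image Prod.snd,
          ((min ((I.filter (fun p => p.2 = j)).card) t : ℕ) : ℝ)) := by
  change _ ≤ max (∑ i ∈ I.image Prod.fst, ((min (fiberCard I Prod.fst i) t : ℕ) : ℝ))
    (∑ j ∈ I.image Prod.snd, ((min (fiberCard I Prod.snd j) t : ℕ) : ℝ))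
  simp only [← Nat.cast_sum]
  subst hI
  have hcount := (card_le_light_rows_add_light_cols_add_heavy_mul I t).trans <|
    Nat.add_le_add_right (Nat.add_le_add (card_light_points_le_sum_min I Prod.fst t)
      (card_light_points_le_sum_min I Prod.snd t)) _
  exact min_mul_sqrt_le_max_of_le_add_mul hcount (card_heavy_fibers_mul_le_sum_min I Prod.fst t)
    (card_heavy_fibers_mul_le_sum_min I Prod.snd t)

/-- For `I ⊆ [N]×[N]` with `|I| = B` and `t ≥ 1`, the larger of
the row-version sum `Σ_{i ∈ R_I} min(|R_i|, t)` and the column-version sum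
`Σ_{j ∈ C_I} min(|C_j|, t)` is at least `min(t·√(B/2), B/4)` (the row sum
being assumed WLOG to be the larger one in the paper's statement). -/
theorem sum_min_row_counts_lower_bound
    (N t B : ℕ) (ht : 1 ≤ t) (I : Finset (Fin N × Fin N)) (hI : I.card = B) :
    min (t * Real.sqrt (B / 2)) (B / 4) ≤
      max
        (∑ i ∈ I.image Prod.fst,
          ((min ((I.filter (fun p => p.1 = i)).card) t : ℕ) : ℝ))
        (∑ j ∈ I.image Prod.snd,
          ((min ((I.filter (fun p => p.2 = j)).card) t : ℕ) : ℝ)) :=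
  sum_min_row_counts_lower_bound_general N t B I hI
end

section
/- For every N of the form 2^m − 1 and every d ≤ N divisible by log_2(N+1), there exists a matrix K ∈ F_2^{N×d} such that every set of ⌈2d/log_2(N+1)⌉ − 1 rows of K is linearly independent over F_2. -/
/-!
Index the rows by the nonzero elements `x` of `𝔽_{2^m}` (there are exactly `N` of them) and let
row `x` be the BCH syndrome `(x, x³, …, x^(2k-1))` with `k = d / m`, read in coordinates as a vector
in `𝔽₂^d`. Over `𝔽₂`, rows are dependent only if some nonempty set `T` of them sums to zero, i.e.
all odd power sums `p₁, p₃, …, p_{2k-1}` of `T` vanish. In characteristic two `p_{2j} = p_j²`, so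
then all of `p₁, …, p_{2k-1}` vanish, and if `#T < 2k` the invertibility of the Vandermonde matrix
of the distinct nonzero elements of `T` forces `T = ∅`.
-/

open Finset

theorem Finset.eq_empty_of_sum_pow_succ_eq_zero {R : Type*} [CommRing R] [IsDomain R]
    {T : Finset R} (h0 : 0 ∉ T) (h : ∀ j < #T, ∑ x ∈ T, x ^ (j + 1) = 0) : T = ∅ := by
  let f : Fin #T → R := fun i => T.equivFin.symm i
  have hf : Function.Injective f := Subtype.val_injective.comp T.equivFin.symm.injective
  have hsum (j : ℕ) : ∑ i, f i * f i ^ j = ∑ x ∈ T, x ^ (j + 1) := by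
    rw [← sum_coe_sort T, ← T.equivFin.symm.sum_comp]
    simp only [f, pow_succ']
  have hf0 : f = 0 := Matrix.eq_zero_of_forall_pow_sum_mul_pow_eq_zero hf fun i => by
    rw [hsum]
    exact h i i.2
  by_contra hT
  obtain ⟨x, hx⟩ := nonempty_iff_ne_empty.mpr hT
  have hx0 : x = 0 := by simpa [f] using congrFun hf0 (T.equivFin ⟨x, hx⟩)
  exact h0 (hx0 ▸ hx)

theorem sum_pow_eq_zero_of_sum_odd_pow_eq_zero {ι R : Type*} [CommSemiring R] [CharP R 2]
    (s : Finset ι) (f : ι → R) {k : ℕ} (h : ∀ t < k, ∑ i ∈ s, f i ^ (2 * t + 1) = 0) :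
    ∀ j, 0 < j → j < 2 * k → ∑ i ∈ s, f i ^ j = 0 := by
  intro j
  induction j using Nat.strong_induction_on with
  | _ j ih =>
    intro hj hjk
    rcases Nat.even_or_odd' j with ⟨t, rfl | rfl⟩
    · have hsq : ∑ i ∈ s, f i ^ (2 * t) = (∑ i ∈ s, f i ^ t) ^ 2 := by
        simp only [CharTwo.sum_sq, ← pow_mul, mul_comm t]
      rw [hsq, ih t (by omega) (by omega) (by omega), zero_pow two_ne_zero]
    · exact h t (by omega)

theorem Finset.eq_empty_of_sum_odd_pow_eq_zero {F : Type*} [Field F] [CharP F 2]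
    {T : Finset F} {k : ℕ} (h0 : 0 ∉ T) (hT : #T < 2 * k)
    (h : ∀ t < k, ∑ x ∈ T, x ^ (2 * t + 1) = 0) : T = ∅ :=
  T.eq_empty_of_sum_pow_succ_eq_zero h0 fun j hj =>
    sum_pow_eq_zero_of_sum_odd_pow_eq_zero T (fun x => x) h (j + 1) j.succ_pos (by omega)

theorem sum_odd_pow_vec_ne_zero {ι F : Type*} [Field F] [CharP F 2] (e : ι ↪ F)
    (he : ∀ i, e i ≠ 0) {k : ℕ} {T : Finset ι} (hT : T.Nonempty) (hTk : #T < 2 * k) :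
    ∑ i ∈ T, (fun t : Fin k => e i ^ (2 * (t : ℕ) + 1)) ≠ 0 := by
  intro hsum
  refine (hT.map (f := e)).ne_empty (eq_empty_of_sum_odd_pow_eq_zero ?_ (by rwa [card_map]) ?_)
  · intro h0
    obtain ⟨i, -, hi⟩ := mem_map.mp h0
    exact he i hi
  · intro t ht
    simpa [sum_map, Finset.sum_apply] using congrFun hsum ⟨t, ht⟩

theorem ZMod.linearIndependent_two_of_forall_sum_ne_zero {ι V : Type*} [AddCommGroup V]
    [Module (ZMod 2) V] {v : ι → V} (h : ∀ s : Finset ι, s.Nonempty → ∑ i ∈ s, v i ≠ 0) :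
    LinearIndependent (ZMod 2) v := by
  classical
  rw [linearIndependent_iff']
  intro s g hg i hi
  by_contra hgi
  refine h (s.filter (g · ≠ 0)) ⟨i, mem_filter.mpr ⟨hi, hgi⟩⟩ ?_
  have hg1 : ∀ j ∈ s.filter (g · ≠ 0), v j = g j • v j := fun j hj => by
    have hgj : g j = 1 := Fin.eq_one_of_ne_zero (g j) (mem_filter.mp hj).2
    rw [hgj, one_smul]
  rw [sum_congr rfl hg1,
    sum_filter_of_ne (p := (g · ≠ 0)) fun j _ hne hgj => hne (by rw [hgj, zero_smul])]
  exact hg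

theorem ZMod.linearIndependent_two_subtype_of_forall_sum_ne_zero {ι V : Type*} [AddCommGroup V]
    [Module (ZMod 2) V] {v : ι → V} (s : Finset ι)
    (h : ∀ T ⊆ s, T.Nonempty → ∑ i ∈ T, v i ≠ 0) :
    LinearIndependent (ZMod 2) (fun i : s => v i) := by
  refine ZMod.linearIndependent_two_of_forall_sum_ne_zero fun T hT => ?_
  change ∑ i ∈ T, v (Function.Embedding.subtype _ i) ≠ 0
  rw [← sum_map T (Function.Embedding.subtype _) v]
  refine h _ (fun i hi => ?_) hT.map
  obtain ⟨j, -, rfl⟩ := mem_map.mp hi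
  exact j.2

theorem exists_binary_matrix_strong_linear_independence_general
    (m N d : ℕ) (hm : 1 ≤ m) (hN : N = 2 ^ m - 1) (hdiv : m ∣ d) :
    ∃ K : Matrix (Fin N) (Fin d) (ZMod 2),
      ∀ s : Finset (Fin N), s.card = 2 * d / m - 1 →
        LinearIndependent (ZMod 2) (fun i : s => K i) := by
  obtain ⟨k, rfl⟩ := hdiv
  have hm0 : m ≠ 0 := by omega
  let F := GaloisField 2 m
  have hcard : Nat.card Fˣ = N := by rw [Nat.card_units, GaloisField.card 2 m hm0, hN]
  let e : Fin N ↪ F :=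
    (Finite.equivFinOfCardEq hcard).symm.toEmbedding.trans ⟨Units.val, Units.val_injective⟩
  have hrank : Module.finrank (ZMod 2) (Fin k → F) =
      Module.finrank (ZMod 2) (Fin (m * k) → ZMod 2) := by
    rw [Module.finrank_pi_fintype, Module.finrank_fin_fun, GaloisField.finrank 2 hm0, sum_const,
      card_univ, Fintype.card_fin, smul_eq_mul, mul_comm]
  let E := LinearEquiv.ofFinrankEq _ _ hrank
  let r (i : Fin N) : Fin k → F := fun t => e i ^ (2 * (t : ℕ) + 1)
  refine ⟨Matrix.of fun i => E (r i), fun s hs => ?_⟩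
  have hs' : #s = 2 * k - 1 := by
    rw [hs, mul_left_comm, Nat.mul_div_cancel_left _ (Nat.pos_of_ne_zero hm0)]
  refine ZMod.linearIndependent_two_subtype_of_forall_sum_ne_zero s fun T hTs hT hsum => ?_
  have hTk : #T < 2 * k := by
    have := card_le_card hTs
    have := hT.card_pos
    omega
  change ∑ i ∈ T, E (r i) = 0 at hsum
  rw [← map_sum, LinearEquiv.map_eq_zero_iff] at hsum
  exact sum_odd_pow_vec_ne_zero e (fun i => Units.ne_zero _) hT hTk hsum

/-- For `N = 2^m − 1` and `d ≤ N` divisible by `m = log₂(N+1)`,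
there is a matrix `K ∈ F_2^{N×d}` such that every set of `⌈2d/m⌉ − 1 = 2d/m − 1`
rows of `K` is linearly independent over `F_2`. -/
theorem exists_binary_matrix_strong_linear_independence
    (m N d : ℕ) (hm : 1 ≤ m) (hN : N = 2 ^ m - 1) (hd : d ≤ N) (hdiv : m ∣ d) :
    ∃ K : Matrix (Fin N) (Fin d) (ZMod 2),
      ∀ s : Finset (Fin N), s.card = 2 * d / m - 1 →
        LinearIndependent (ZMod 2) (fun i : s => K i) :=
  exists_binary_matrix_strong_linear_independence_general m N d hm hN hdiv
end
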